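/- Fix integers L, T ≥ 5 and β ∈ ℝ, let Λ = (ℤ/Lℤ) × (ℤ/Tℤ) with unit shifts e₁, e₂, let q : Λ × {1,2} → ℝ, θ(n) = q(n,1) + q(n+e₁,2) − q(n+e₂,1) − q(n,2), and S_G(q) = β Σ_{n∈Λ} (1 − cos θ(n)). Define C_GG(n,μ) = 2 Σ_{m∈Λ} Σ_{ν∈{1,2}} (∂S_G/∂q(m,ν))·(∂²S_G/∂q(m,ν)∂q(n,μ)). Then for μ = 1: C_GG(n,1) = 2β²·[ (4 sin θ(n) − sin θ(n−e₂) − sin θ(n+e₁) − sin θ(n+e₂) − sin θ(n−e₁))·cos θ(n) − (4 sin θ(n−e₂) − sin θ(n) − sin θ(n−e₁−e₂) − sin θ(n−2e₂) − sin θ(n+e₁−e₂))·cos θ(n−e₂) ]. -/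

import Mathlib

/-!
Writing `S_G(q) = β Σ_k (1 − cos ℓ_k(q))` with `ℓ_k` the linear form `q ↦ θ(k)`, one gets
`∂_i S_G = β Σ_k sin θ(k) ℓ_k(e_i)` and `∂_i ∂_j S_G = β Σ_k cos θ(k) ℓ_k(e_i) ℓ_k(e_j)`.
Exchanging sums, `C_GG(n,μ) = 2β Σ_k cos θ(k) ℓ_k(e_{n,μ}) Σ_i ∂_i S_G ℓ_k(e_i)`. Only the
plaquettes `k = n` and `k = n − e₂` contain the link `(n,1)`, and the inner sum is `β` times the
lattice Laplacian `4 f(k) − Σ_{k' ∼ k} f(k')` of `f = sin θ`: each of the four links of `k` is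
shared with exactly one neighbouring plaquette, with opposite orientation.
-/

/-- The plaquette angle `θ(n) = q(n,1) + q(n+e₁,2) − q(n+e₂,1) − q(n,2)` on the periodic
lattice `Λ = (ℤ/Lℤ) × (ℤ/Tℤ)`; the direction `μ ∈ {1,2}` is encoded by `Fin 2` (so `0`
stands for direction `1` and `1` for direction `2`). -/
def plaqAngle (L T : ℕ) (q : (ZMod L × ZMod T) × Fin 2 → ℝ) (n : ZMod L × ZMod T) : ℝ :=
  q (n, 0) + q (n + (1, 0), 1) - q (n + (0, 1), 0) - q (n, 1)

/-- The `U(1)` Wilson gauge action `S_G(q) = β Σ_{n∈Λ} (1 − cos θ(n))`. -/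
noncomputable def gaugeAction (L T : ℕ) [NeZero L] [NeZero T] (β : ℝ)
    (q : (ZMod L × ZMod T) × Fin 2 → ℝ) : ℝ :=
  β * ∑ n : ZMod L × ZMod T, (1 - Real.cos (plaqAngle L T q n))

/-- The pure gauge part of the force-gradient term,
`C_GG(n,μ) = 2 Σ_{m,ν} (∂S_G/∂q(m,ν))·(∂²S_G/∂q(m,ν)∂q(n,μ))`. -/
noncomputable def CGG (L T : ℕ) [NeZero L] [NeZero T] (β : ℝ)
    (q : (ZMod L × ZMod T) × Fin 2 → ℝ) (n : ZMod L × ZMod T) (μ : Fin 2) : ℝ :=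
  2 * ∑ m : ZMod L × ZMod T, ∑ ν : Fin 2,
      fderiv ℝ (gaugeAction L T β) q (Pi.single (m, ν) 1) *
        fderiv ℝ (fun q' => fderiv ℝ (gaugeAction L T β) q' (Pi.single (m, ν) 1)) q
          (Pi.single (n, μ) 1)

section CosineSum

variable {E : Type*} [NormedAddCommGroup E] [NormedSpace ℝ E] {ι : Type*} [Fintype ι]
  (β : ℝ) (ℓ : ι → E →L[ℝ] ℝ)

theorem hasFDerivAt_mul_sum_one_sub_cos (q : E) :
    HasFDerivAt (fun q => β * ∑ k, (1 - Real.cos (ℓ k q)))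
      (β • ∑ k, Real.sin (ℓ k q) • ℓ k) q := by
  refine (HasFDerivAt.fun_sum fun k _ => ?_).const_mul β
  exact ((ℓ k).hasFDerivAt (x := q)).cos.const_sub 1 |>.congr_fderiv (by ext; simp)

theorem fderiv_mul_sum_one_sub_cos_apply (q v : E) :
    fderiv ℝ (fun q => β * ∑ k, (1 - Real.cos (ℓ k q))) q v =
      β * ∑ k, Real.sin (ℓ k q) * ℓ k v := by
  rw [(hasFDerivAt_mul_sum_one_sub_cos β ℓ q).fderiv]
  simp

theorem fderiv_fderiv_mul_sum_one_sub_cos_apply (q v w : E) :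
    fderiv ℝ (fun q => fderiv ℝ (fun q => β * ∑ k, (1 - Real.cos (ℓ k q))) q v) q w =
      β * ∑ k, Real.cos (ℓ k q) * ℓ k v * ℓ k w := by
  have h : HasFDerivAt (fun q => β * ∑ k, Real.sin (ℓ k q) * ℓ k v)
      (β • ∑ k, (Real.cos (ℓ k q) * ℓ k v) • ℓ k) q := by
    refine (HasFDerivAt.fun_sum fun k _ => ?_).const_mul β
    exact (((ℓ k).hasFDerivAt (x := q)).sin.mul_const (ℓ k v)).congr_fderiv
      (by rw [smul_smul, mul_comm])
  simp only [fderiv_mul_sum_one_sub_cos_apply, h.fderiv]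
  simp [mul_assoc]

end CosineSum

theorem sum_fderiv_mul_fderiv_fderiv_mul_sum_one_sub_cos {ι ι' : Type*} [Fintype ι]
    [Fintype ι'] [DecidableEq ι'] (β : ℝ) (ℓ : ι → (ι' → ℝ) →L[ℝ] ℝ) (q w : ι' → ℝ) :
    ∑ i, fderiv ℝ (fun q => β * ∑ k, (1 - Real.cos (ℓ k q))) q (Pi.single i 1) *
        fderiv ℝ (fun q => fderiv ℝ (fun q => β * ∑ k, (1 - Real.cos (ℓ k q))) q
          (Pi.single i 1)) q w =
      β * ∑ k, Real.cos (ℓ k q) * ℓ k w *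
        ∑ i, fderiv ℝ (fun q => β * ∑ k, (1 - Real.cos (ℓ k q))) q (Pi.single i 1) *
          ℓ k (Pi.single i 1) := by
  simp_rw [fderiv_fderiv_mul_sum_one_sub_cos_apply, Finset.mul_sum]
  rw [Finset.sum_comm]
  refine Finset.sum_congr rfl fun k _ => Finset.sum_congr rfl fun i _ => ?_
  ring

section Lattice

variable (L T : ℕ)

def plaqAngleCLM (n : ZMod L × ZMod T) : ((ZMod L × ZMod T) × Fin 2 → ℝ) →L[ℝ] ℝ :=
  .proj (n, 0) + .proj (n + (1, 0), 1) - .proj (n + (0, 1), 0) - .proj (n, 1)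

def latticeLaplacian (f : ZMod L × ZMod T → ℝ) (n : ZMod L × ZMod T) : ℝ :=
  4 * f n - f (n - (0, 1)) - f (n + (1, 0)) - f (n + (0, 1)) - f (n - (1, 0))

theorem plaqAngleCLM_apply (n : ZMod L × ZMod T) (q : (ZMod L × ZMod T) × Fin 2 → ℝ) :
    plaqAngleCLM L T n q = plaqAngle L T q n :=
  rfl

theorem plaqAngleCLM_single_zero (k m : ZMod L × ZMod T) :
    plaqAngleCLM L T k (Pi.single (m, 0) 1) =
      (if k = m then 1 else 0) - (if k + (0, 1) = m then 1 else 0) := by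
  simp [plaqAngleCLM, Pi.single_apply, Prod.ext_iff]

theorem plaqAngleCLM_single_one (k m : ZMod L × ZMod T) :
    plaqAngleCLM L T k (Pi.single (m, 1) 1) =
      (if k + (1, 0) = m then 1 else 0) - (if k = m then 1 else 0) := by
  simp [plaqAngleCLM, Pi.single_apply, Prod.ext_iff]

variable [NeZero L] [NeZero T] (β : ℝ) (q : (ZMod L × ZMod T) × Fin 2 → ℝ)

theorem gaugeAction_eq_mul_sum_one_sub_cos :
    gaugeAction L T β = fun q => β * ∑ k, (1 - Real.cos (plaqAngleCLM L T k q)) :=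
  rfl

theorem fderiv_gaugeAction_single_zero (m : ZMod L × ZMod T) :
    fderiv ℝ (gaugeAction L T β) q (Pi.single (m, 0) 1) =
      β * (Real.sin (plaqAngle L T q m) - Real.sin (plaqAngle L T q (m - (0, 1)))) := by
  rw [gaugeAction_eq_mul_sum_one_sub_cos, fderiv_mul_sum_one_sub_cos_apply]
  simp only [plaqAngleCLM_single_zero, ← eq_sub_iff_add_eq, mul_sub, mul_ite,
    mul_one, mul_zero, Finset.sum_sub_distrib, Finset.sum_ite_eq', Finset.mem_univ, if_true]
  simp only [plaqAngleCLM_apply]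

theorem fderiv_gaugeAction_single_one (m : ZMod L × ZMod T) :
    fderiv ℝ (gaugeAction L T β) q (Pi.single (m, 1) 1) =
      β * (Real.sin (plaqAngle L T q (m - (1, 0))) - Real.sin (plaqAngle L T q m)) := by
  rw [gaugeAction_eq_mul_sum_one_sub_cos, fderiv_mul_sum_one_sub_cos_apply]
  simp only [plaqAngleCLM_single_one, ← eq_sub_iff_add_eq, mul_sub, mul_ite,
    mul_one, mul_zero, Finset.sum_sub_distrib, Finset.sum_ite_eq', Finset.mem_univ, if_true]
  simp only [plaqAngleCLM_apply]

theorem sum_fderiv_gaugeAction_mul_plaqAngleCLM (k : ZMod L × ZMod T) :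
    ∑ i, fderiv ℝ (gaugeAction L T β) q (Pi.single i 1) * plaqAngleCLM L T k (Pi.single i 1) =
      β * latticeLaplacian L T (fun n => Real.sin (plaqAngle L T q n)) k := by
  rw [Fintype.sum_prod_type]
  simp only [Fin.sum_univ_two, fderiv_gaugeAction_single_zero, fderiv_gaugeAction_single_one,
    plaqAngleCLM_single_zero, plaqAngleCLM_single_one, mul_sub, mul_ite, mul_one, mul_zero,
    Finset.sum_add_distrib, Finset.sum_sub_distrib, Finset.sum_ite_eq, Finset.mem_univ, if_true,
    add_sub_cancel_right]
  rw [latticeLaplacian]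
  ring

theorem CGG_zero_eq (n : ZMod L × ZMod T) :
    CGG L T β q n 0 =
      2 * β ^ 2 *
        (latticeLaplacian L T (fun n => Real.sin (plaqAngle L T q n)) n *
            Real.cos (plaqAngle L T q n) -
          latticeLaplacian L T (fun n => Real.sin (plaqAngle L T q n)) (n - (0, 1)) *
            Real.cos (plaqAngle L T q (n - (0, 1)))) := by
  rw [CGG, ← Fintype.sum_prod_type', gaugeAction_eq_mul_sum_one_sub_cos,
    sum_fderiv_mul_fderiv_fderiv_mul_sum_one_sub_cos, ← gaugeAction_eq_mul_sum_one_sub_cos]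
  simp only [sum_fderiv_gaugeAction_mul_plaqAngleCLM, plaqAngleCLM_single_zero,
    ← eq_sub_iff_add_eq, mul_sub, sub_mul, mul_ite, ite_mul, mul_one, mul_zero, zero_mul,
    Finset.sum_sub_distrib, Finset.sum_ite_eq', Finset.mem_univ, if_true]
  simp only [plaqAngleCLM_apply]
  ring

end Lattice

theorem CGG_formula_general (L T : ℕ) [NeZero L] [NeZero T] (β : ℝ)
    (q : (ZMod L × ZMod T) × Fin 2 → ℝ) (n : ZMod L × ZMod T) :
    CGG L T β q n 0 =
      2 * β ^ 2 *
        ((4 * Real.sin (plaqAngle L T q n)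
            - Real.sin (plaqAngle L T q (n - (0, 1)))
            - Real.sin (plaqAngle L T q (n + (1, 0)))
            - Real.sin (plaqAngle L T q (n + (0, 1)))
            - Real.sin (plaqAngle L T q (n - (1, 0)))) * Real.cos (plaqAngle L T q n)
          - (4 * Real.sin (plaqAngle L T q (n - (0, 1)))
              - Real.sin (plaqAngle L T q n)
              - Real.sin (plaqAngle L T q (n - (1, 0) - (0, 1)))
              - Real.sin (plaqAngle L T q (n - (0, 2)))
              - Real.sin (plaqAngle L T q (n + (1, 0) - (0, 1))))
            * Real.cos (plaqAngle L T q (n - (0, 1)))) := by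
  have h₁ : n - (0, 1) - (0, 1) = n - (0, 2) := by
    rw [sub_sub, Prod.mk_add_mk]; norm_num
  have h₂ : n - (0, 1) + (1, 0) = n + (1, 0) - (0, 1) := sub_add_eq_add_sub _ _ _
  have h₃ : n - (0, 1) - (1, 0) = n - (1, 0) - (0, 1) := sub_right_comm _ _ _
  rw [CGG_zero_eq, latticeLaplacian, latticeLaplacian, sub_add_cancel, h₁, h₂, h₃]
  ring

/-- Explicit formula for the gauge force-gradient term `C_GG(n,1)` of the two-dimensional
Schwinger model in terms of the plaquette angles at the eight neighbouring plaquettes. -/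
theorem CGG_formula (L T : ℕ) [NeZero L] [NeZero T] (hL : 5 ≤ L) (hT : 5 ≤ T) (β : ℝ)
    (q : (ZMod L × ZMod T) × Fin 2 → ℝ) (n : ZMod L × ZMod T) :
    CGG L T β q n 0 =
      2 * β ^ 2 *
        ((4 * Real.sin (plaqAngle L T q n)
            - Real.sin (plaqAngle L T q (n - (0, 1)))
            - Real.sin (plaqAngle L T q (n + (1, 0)))
            - Real.sin (plaqAngle L T q (n + (0, 1)))
            - Real.sin (plaqAngle L T q (n - (1, 0)))) * Real.cos (plaqAngle L T q n)
          - (4 * Real.sin (plaqAngle L T q (n - (0, 1)))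
              - Real.sin (plaqAngle L T q n)
              - Real.sin (plaqAngle L T q (n - (1, 0) - (0, 1)))
              - Real.sin (plaqAngle L T q (n - (0, 2)))
              - Real.sin (plaqAngle L T q (n + (1, 0) - (0, 1))))
            * Real.cos (plaqAngle L T q (n - (0, 1)))) :=
  CGG_formula_general L T β q n
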